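/- arXiv:2506.13613 — 3 statements merged into one kernel-verified Lean document; each statement's English description precedes it below -/
import Mathlib

section
/- Let d ≥ 1 and let V : ℝ^d → ℝ be continuously differentiable with V and ∇V of at most polynomial growth and e^{−V} integrable; let π(x) = e^{−V(x)}/Z be the associated probability density. Fix ε > 0 and let p_{m}(x) = k_ε(x − m). Then the gradient with respect to m of the map m ↦ KL(N(m, εI_d) | π) = ∫ p_m(x) log(p_m(x)/π(x)) dx exists and equals E_{N(m, εI_d)}[∇ log(p_m/π)] = ∫ ∇ log(p_m/π)(x) p_m(x) dx, which moreover equals E_{N(m, εI_d)}[∇V]. -/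
open MeasureTheory Real

/-- Density of the isotropic Gaussian `N(m, ε I_d)` on `ℝ^d`. -/
noncomputable def gaussPDF (d : ℕ) (m : EuclideanSpace ℝ (Fin d)) (ε : ℝ)
    (x : EuclideanSpace ℝ (Fin d)) : ℝ :=
  (2 * Real.pi * ε) ^ (-(d : ℝ) / 2) * Real.exp (-‖x - m‖ ^ 2 / (2 * ε))

/-! Write `p_m(x) = p_0(x - m)` and `log π = -V - log Z`. The integrand of the divergence is then
`p_0(x - m) (log p_0(x - m) + log Z) + p_m(x) V(x)`, and after translating by `m` only
`∫ p_0(y) V(y + m) dy` depends on `m`. It can be differentiated under the integral sign because the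
Gaussian integrates every polynomial while `V` and `∇V` grow at most polynomially. On the other
side `∇ log (p_m / π)(x) = -(x - m) / ε + ∇V(x)`, and the first term has mean zero by the symmetry
of the Gaussian. -/

def HasPolynomialGrowth {E F : Type*} [Norm E] [Norm F] (f : E → F) : Prop :=
  ∃ (C : ℝ) (k : ℕ), ∀ x, ‖f x‖ ≤ C * (1 + ‖x‖) ^ k

section PolynomialGrowth

variable {E F : Type*} [SeminormedAddCommGroup E] [SeminormedAddCommGroup F] {f : E → F}

lemma one_add_norm_add_le_mul (x y : E) : 1 + ‖x + y‖ ≤ (1 + ‖y‖) * (1 + ‖x‖) := by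
  nlinarith [norm_add_le x y, mul_nonneg (norm_nonneg x) (norm_nonneg y)]

lemma HasPolynomialGrowth.exists_bound_comp_add (hf : HasPolynomialGrowth f) :
    ∃ (C : ℝ) (k : ℕ), ∀ x y, ‖f (x + y)‖ ≤ C * (1 + ‖y‖) ^ k * (1 + ‖x‖) ^ k := by
  obtain ⟨C, k, hC⟩ := hf
  have hC0 : 0 ≤ C := by simpa using (norm_nonneg _).trans (hC 0)
  refine ⟨C, k, fun x y => (hC _).trans ?_⟩
  rw [mul_assoc, ← mul_pow]
  gcongr
  exact one_add_norm_add_le_mul x y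

lemma HasPolynomialGrowth.comp_add_right (hf : HasPolynomialGrowth f) (y : E) :
    HasPolynomialGrowth (fun x => f (x + y)) :=
  let ⟨C, k, hC⟩ := hf.exists_bound_comp_add
  ⟨C * (1 + ‖y‖) ^ k, k, fun x => hC x y⟩

lemma hasPolynomialGrowth_sub_const (m : E) : HasPolynomialGrowth (fun x : E => x - m) :=
  ⟨1 + ‖m‖, 1, fun x => by nlinarith [norm_sub_le x m, norm_nonneg x, norm_nonneg m]⟩

lemma hasPolynomialGrowth_const_add_mul_norm_sq (a b : ℝ) :
    HasPolynomialGrowth (fun x : E => a + b * ‖x‖ ^ 2) := by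
  refine ⟨|a| + |b|, 2, fun x => ?_⟩
  calc ‖a + b * ‖x‖ ^ 2‖ ≤ |a| + |b| * ‖x‖ ^ 2 := by
        refine (norm_add_le _ _).trans_eq ?_
        rw [norm_mul, norm_pow, norm_norm]
        rfl
    _ ≤ (|a| + |b|) * (1 + ‖x‖) ^ 2 := by
        nlinarith [abs_nonneg a, abs_nonneg b, norm_nonneg x,
          mul_nonneg (abs_nonneg b) (norm_nonneg x)]

end PolynomialGrowth

def HasFiniteMoments {E : Type*} [Norm E] [MeasurableSpace E] (g : E → ℝ) (μ : Measure E) :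
    Prop :=
  ∀ k : ℕ, Integrable (fun x => (1 + ‖x‖) ^ k * g x) μ

namespace HasFiniteMoments

variable {E F : Type*} [NormedAddCommGroup E] [MeasurableSpace E] [NormedAddCommGroup F]
  [NormedSpace ℝ F] {μ : Measure E} {g : E → ℝ}

lemma integrable (hg : HasFiniteMoments g μ) : Integrable g μ := by
  simpa using hg 0

lemma const_mul (hg : HasFiniteMoments g μ) (c : ℝ) : HasFiniteMoments (fun x => c * g x) μ :=
  fun k => by simpa only [mul_left_comm] using (hg k).const_mul c

lemma integrable_smul (hg : HasFiniteMoments g μ) {f : E → F}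
    (hf_meas : AEStronglyMeasurable f μ) (hf : HasPolynomialGrowth f) :
    Integrable (fun x => g x • f x) μ := by
  obtain ⟨C, k, hC⟩ := hf
  refine ((hg k).norm.const_mul C).mono' (hg.integrable.aestronglyMeasurable.smul hf_meas) ?_
  refine Filter.Eventually.of_forall fun x => ?_
  rw [norm_smul, norm_mul, norm_of_nonneg (by positivity : (0 : ℝ) ≤ (1 + ‖x‖) ^ k)]
  calc ‖g x‖ * ‖f x‖ ≤ ‖g x‖ * (C * (1 + ‖x‖) ^ k) := by gcongr; exact hC x
    _ = C * ((1 + ‖x‖) ^ k * ‖g x‖) := by ring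

variable [NormedSpace ℝ E] [OpensMeasurableSpace E] [SecondCountableTopology E]

theorem hasFDerivAt_integral_smul_comp_add (hg : HasFiniteMoments g μ) {f : E → F}
    (hf : ContDiff ℝ 1 f) (hf_growth : HasPolynomialGrowth f)
    (hf'_growth : HasPolynomialGrowth (fderiv ℝ f)) (m : E) :
    HasFDerivAt (fun m => ∫ y, g y • f (y + m) ∂μ) (∫ y, g y • fderiv ℝ f (y + m) ∂μ) m := by
  obtain ⟨C, k, hC⟩ := hf'_growth.exists_bound_comp_add
  have hf_cont : Continuous f := hf.continuous
  have hf'_cont : Continuous (fderiv ℝ f) := hf.continuous_fderiv one_ne_zero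
  refine hasFDerivAt_integral_of_dominated_of_fderiv_le (Metric.ball_mem_nhds m one_pos)
    (F' := fun m' y => g y • fderiv ℝ f (y + m'))
    (bound := fun y => C * (2 + ‖m‖) ^ k * ‖(1 + ‖y‖) ^ k * g y‖)
    (Filter.Eventually.of_forall fun m' => hg.integrable.aestronglyMeasurable.smul
      (hf_cont.comp (continuous_add_const m')).aestronglyMeasurable)
    (hg.integrable_smul (hf_cont.comp (continuous_add_const m)).aestronglyMeasurable
      (hf_growth.comp_add_right m))
    (hg.integrable.aestronglyMeasurable.smul
      (hf'_cont.comp (continuous_add_const m)).aestronglyMeasurable)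
    (Filter.Eventually.of_forall fun y m' hm' => ?_) ((hg k).norm.const_mul _)
    (Filter.Eventually.of_forall fun y m' _ => ?_)
  · have hm'_le : 1 + ‖m'‖ ≤ 2 + ‖m‖ := by
      linarith [norm_lt_of_mem_ball hm']
    have hC0 : 0 ≤ C := by simpa using (norm_nonneg _).trans (hC 0 0)
    rw [norm_smul, norm_mul, norm_of_nonneg (by positivity : (0 : ℝ) ≤ (1 + ‖y‖) ^ k)]
    calc ‖g y‖ * ‖fderiv ℝ f (y + m')‖ ≤ ‖g y‖ * (C * (1 + ‖m'‖) ^ k * (1 + ‖y‖) ^ k) := by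
          gcongr; exact hC y m'
      _ ≤ ‖g y‖ * (C * (2 + ‖m‖) ^ k * (1 + ‖y‖) ^ k) := by gcongr
      _ = C * (2 + ‖m‖) ^ k * ((1 + ‖y‖) ^ k * ‖g y‖) := by ring
  · have hshift : HasFDerivAt (fun m' => y + m') (ContinuousLinearMap.id ℝ E) m' :=
      (hasFDerivAt_id m').const_add y
    have h := (((hf.differentiable one_ne_zero) (y + m')).hasFDerivAt.comp m' hshift).const_smul
      (g y)
    rwa [ContinuousLinearMap.comp_id] at h

end HasFiniteMoments

section Gradient

variable {E : Type*} [NormedAddCommGroup E] [InnerProductSpace ℝ E] [CompleteSpace E]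
  {f g : E → ℝ} {f' g' x : E}

lemma HasGradientAt.add (hf : HasGradientAt f f' x) (hg : HasGradientAt g g' x) :
    HasGradientAt (fun y => f y + g y) (f' + g') x := by
  rw [hasGradientAt_iff_hasFDerivAt, map_add]
  exact hf.hasFDerivAt.add hg.hasFDerivAt

lemma HasGradientAt.add_const (hf : HasGradientAt f f' x) (c : ℝ) :
    HasGradientAt (fun y => f y + c) f' x := by
  simpa using hf.add (hasGradientAt_const x c)

lemma HasGradientAt.const_add (hf : HasGradientAt f f' x) (c : ℝ) :
    HasGradientAt (fun y => c + f y) f' x := by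
  simpa using (hasGradientAt_const x c).add hf

lemma ContDiff.continuous_gradient (hf : ContDiff ℝ 1 f) : Continuous (gradient f) :=
  (InnerProductSpace.toDual ℝ E).symm.continuous.comp (hf.continuous_fderiv one_ne_zero)

lemma HasPolynomialGrowth.fderiv_of_gradient (hf : HasPolynomialGrowth (gradient f)) :
    HasPolynomialGrowth (fderiv ℝ f) := by
  obtain ⟨C, k, hC⟩ := hf
  exact ⟨C, k, fun x => by rw [← toDual_gradient, LinearIsometryEquiv.norm_map]; exact hC x⟩

theorem HasFiniteMoments.hasGradientAt_integral_mul_comp_add [MeasurableSpace E]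
    [OpensMeasurableSpace E] [SecondCountableTopology E] {μ : Measure E}
    (hg : HasFiniteMoments g μ) (hf : ContDiff ℝ 1 f)
    (hf_growth : HasPolynomialGrowth f) (hf'_growth : HasPolynomialGrowth (gradient f)) (m : E) :
    HasGradientAt (fun m => ∫ y, g y * f (y + m) ∂μ) (∫ y, g y • gradient f (y + m) ∂μ) m := by
  have h_toDual : InnerProductSpace.toDual ℝ E (∫ y, g y • gradient f (y + m) ∂μ) =
      ∫ y, InnerProductSpace.toDual ℝ E (g y • gradient f (y + m)) ∂μ :=
    ((InnerProductSpace.toDual ℝ E).toContinuousLinearEquiv.integral_comp_comm _).symm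
  rw [hasGradientAt_iff_hasFDerivAt, h_toDual]
  simp only [map_smul, toDual_gradient]
  exact hg.hasFDerivAt_integral_smul_comp_add hf hf_growth hf'_growth.fderiv_of_gradient m

end Gradient

lemma one_add_pow_mul_exp_neg_mul_sq_le {b t : ℝ} (hb : 0 < b) (ht : 0 ≤ t) (k : ℕ) :
    (1 + t) ^ k * exp (-b * t ^ 2) ≤
      k.factorial * (4 / b) ^ k * exp (b / 2) * exp (-(b / 2) * t ^ 2) := by
  set s := b / 4 * (1 + t) ^ 2 with hs
  have h_pow : (1 + t) ^ k ≤ (4 / b) ^ k * s ^ k := by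
    calc (1 + t) ^ k ≤ (1 + t) ^ (2 * k) := pow_le_pow_right₀ (by linarith) (by omega)
      _ = (4 / b) ^ k * s ^ k := by
        rw [hs, ← mul_pow, ← mul_assoc, show 4 / b * (b / 4) = 1 by field_simp, one_mul, pow_mul]
  have h_exp : s ^ k ≤ k.factorial * exp s :=
    (div_le_iff₀' (by positivity)).mp (pow_div_factorial_le_exp s (by positivity) k)
  have h_gauss : exp s * exp (-b * t ^ 2) ≤ exp (b / 2) * exp (-(b / 2) * t ^ 2) := by
    rw [← exp_add, ← exp_add, exp_le_exp, hs]
    nlinarith [mul_nonneg hb.le (sq_nonneg (t - 1))]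
  calc (1 + t) ^ k * exp (-b * t ^ 2) ≤ (4 / b) ^ k * (k.factorial * exp s) * exp (-b * t ^ 2) := by
        gcongr; exact h_pow.trans (by gcongr)
    _ = k.factorial * (4 / b) ^ k * (exp s * exp (-b * t ^ 2)) := by ring
    _ ≤ k.factorial * (4 / b) ^ k * (exp (b / 2) * exp (-(b / 2) * t ^ 2)) := by gcongr
    _ = _ := by ring

section GaussianWeight

variable {E : Type*} [NormedAddCommGroup E] [InnerProductSpace ℝ E] [FiniteDimensional ℝ E]
  [MeasurableSpace E] [BorelSpace E] {b : ℝ}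

lemma integrable_exp_neg_mul_sq_norm (hb : 0 < b) :
    Integrable (fun x : E => exp (-b * ‖x‖ ^ 2)) :=
  -- a non-integrable function would have Bochner integral `0`
  Integrable.of_integral_ne_zero <| by
    rw [GaussianFourier.integral_rexp_neg_mul_sq_norm hb]
    positivity

lemma hasFiniteMoments_exp_neg_mul_sq_norm (hb : 0 < b) :
    HasFiniteMoments (fun x : E => exp (-b * ‖x‖ ^ 2)) volume := fun k =>
  ((integrable_exp_neg_mul_sq_norm (half_pos hb)).const_mul _).mono'
    (by fun_prop) (Filter.Eventually.of_forall fun x => by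
      rw [norm_of_nonneg (by positivity)]
      exact one_add_pow_mul_exp_neg_mul_sq_le hb (norm_nonneg x) k)

end GaussianWeight

lemma integral_smul_eq_zero_of_even {E : Type*} [NormedAddCommGroup E] [NormedSpace ℝ E]
    [MeasurableSpace E] [MeasurableNeg E] {μ : Measure E} [μ.IsNegInvariant] {g : E → ℝ}
    (hg : ∀ x, g (-x) = g x) : ∫ x, g x • x ∂μ = 0 := by
  have h : ∫ x, g x • x ∂μ = -∫ x, g x • x ∂μ :=
    calc ∫ x, g x • x ∂μ = ∫ x, g (-x) • -x ∂μ := (integral_neg_eq_self (fun x => g x • x) μ).symm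
      _ = -∫ x, g x • x ∂μ := by simp only [hg, smul_neg, integral_neg]
  linear_combination (norm := module) (2⁻¹ : ℝ) • h

section GaussPDF

variable {d : ℕ} {ε : ℝ} {m x : EuclideanSpace ℝ (Fin d)}

lemma gaussPDF_pos (hε : 0 < ε) : 0 < gaussPDF d m ε x := by
  unfold gaussPDF; positivity

lemma gaussPDF_zero_apply_sub : gaussPDF d 0 ε (x - m) = gaussPDF d m ε x := by
  simp [gaussPDF]

lemma gaussPDF_zero_apply_neg : gaussPDF d 0 ε (-x) = gaussPDF d 0 ε x := by
  simp [gaussPDF]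

lemma log_gaussPDF (hε : 0 < ε) :
    log (gaussPDF d m ε x) = log ((2 * π * ε) ^ (-(d : ℝ) / 2)) - (2 * ε)⁻¹ * ‖x - m‖ ^ 2 := by
  rw [gaussPDF, log_mul (by positivity) (exp_pos _).ne', log_exp]
  ring

lemma hasFiniteMoments_gaussPDF (hε : 0 < ε) : HasFiniteMoments (gaussPDF d 0 ε) volume := by
  have h_eq : gaussPDF d 0 ε =
      fun x => (2 * π * ε) ^ (-(d : ℝ) / 2) * exp (-(2 * ε)⁻¹ * ‖x‖ ^ 2) := by
    ext x
    simp only [gaussPDF, sub_zero]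
    congr 2
    ring
  rw [h_eq]
  exact (hasFiniteMoments_exp_neg_mul_sq_norm (inv_pos.mpr (mul_pos two_pos hε))).const_mul _

lemma integrable_gaussPDF_smul {F : Type*} [NormedAddCommGroup F] [NormedSpace ℝ F]
    (hε : 0 < ε) {f : EuclideanSpace ℝ (Fin d) → F} (hf_meas : AEStronglyMeasurable f)
    (hf : HasPolynomialGrowth f) (m : EuclideanSpace ℝ (Fin d)) :
    Integrable (fun x => gaussPDF d m ε x • f x) := by
  have hshift := ((hasFiniteMoments_gaussPDF hε).integrable_smul
    (hf_meas.comp_quasiMeasurePreserving (quasiMeasurePreserving_add_right volume m))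
    (hf.comp_add_right m)).comp_sub_right m
  simpa only [gaussPDF_zero_apply_sub, Function.comp_apply, sub_add_cancel] using hshift

lemma integral_gaussPDF_smul_eq {F : Type*} [NormedAddCommGroup F] [NormedSpace ℝ F]
    (f : EuclideanSpace ℝ (Fin d) → F) (m : EuclideanSpace ℝ (Fin d)) :
    ∫ x, gaussPDF d m ε x • f x = ∫ y, gaussPDF d 0 ε y • f (y + m) := by
  rw [← integral_sub_right_eq_self (fun y => gaussPDF d 0 ε y • f (y + m)) m]
  simp only [gaussPDF_zero_apply_sub, sub_add_cancel]

lemma integral_gaussPDF_smul_sub_eq_zero (m : EuclideanSpace ℝ (Fin d)) :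
    ∫ x, gaussPDF d m ε x • (x - m) = 0 := by
  rw [integral_gaussPDF_smul_eq]
  simpa only [add_sub_cancel_right] using
    integral_smul_eq_zero_of_even (μ := volume) fun x => gaussPDF_zero_apply_neg (ε := ε)

lemma hasGradientAt_log_gaussPDF (hε : 0 < ε) (m x : EuclideanSpace ℝ (Fin d)) :
    HasGradientAt (fun y => log (gaussPDF d m ε y)) (-ε⁻¹ • (x - m)) x := by
  simp only [log_gaussPDF hε]
  rw [hasGradientAt_iff_hasFDerivAt]
  refine ((((hasFDerivAt_id x).sub_const m).norm_sq.const_mul (2 * ε)⁻¹).const_sub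
    _).congr_fderiv ?_
  ext v
  simp only [id_eq, map_sub, ContinuousLinearMap.comp_id, neg_apply, smul_apply, sub_apply,
    coe_innerSL_apply, nsmul_eq_mul, smul_eq_mul, neg_smul, map_neg, map_smul,
    InnerProductSpace.toDual_apply_apply]
  ring

end GaussPDF

section KullbackLeibler

variable {d : ℕ} {ε : ℝ} {V πd : EuclideanSpace ℝ (Fin d) → ℝ}

lemma log_gaussPDF_div (hε : 0 < ε) (hint : Integrable (fun x => exp (-V x)))
    (hπd : ∀ x, πd x = exp (-V x) / ∫ y, exp (-V y)) (m x : EuclideanSpace ℝ (Fin d)) :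
    log (gaussPDF d m ε x / πd x) = log (gaussPDF d m ε x) + log (∫ y, exp (-V y)) + V x := by
  have hZ : 0 < ∫ y, exp (-V y) := integral_exp_pos hint
  rw [hπd, log_div (gaussPDF_pos hε).ne' (div_pos (exp_pos _) hZ).ne',
    log_div (exp_pos _).ne' hZ.ne', log_exp]
  ring

lemma hasGradientAt_log_gaussPDF_div (hε : 0 < ε) (hV : Differentiable ℝ V)
    (hint : Integrable (fun x => exp (-V x)))
    (hπd : ∀ x, πd x = exp (-V x) / ∫ y, exp (-V y)) (m x : EuclideanSpace ℝ (Fin d)) :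
    HasGradientAt (fun y => log (gaussPDF d m ε y / πd y)) (-ε⁻¹ • (x - m) + gradient V x) x := by
  simp only [log_gaussPDF_div hε hint hπd m]
  exact ((hasGradientAt_log_gaussPDF hε m x).add_const _).add (hV x).hasGradientAt

lemma integral_gaussPDF_mul_log_div_eq (hε : 0 < ε) (hV : Continuous V)
    (hV_growth : HasPolynomialGrowth V) (hint : Integrable (fun x => exp (-V x)))
    (hπd : ∀ x, πd x = exp (-V x) / ∫ y, exp (-V y)) (m : EuclideanSpace ℝ (Fin d)) :
    ∫ x, gaussPDF d m ε x * log (gaussPDF d m ε x / πd x) =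
      (∫ y, gaussPDF d 0 ε y * (log (gaussPDF d 0 ε y) + log (∫ z, exp (-V z)))) +
        ∫ y, gaussPDF d 0 ε y * V (y + m) := by
  set entropyTerm := fun y => gaussPDF d 0 ε y * (log (gaussPDF d 0 ε y) + log (∫ z, exp (-V z)))
  have h_log : ∀ y, log (gaussPDF d 0 ε y) + log (∫ z, exp (-V z)) =
      (log ((2 * π * ε) ^ (-(d : ℝ) / 2)) + log (∫ z, exp (-V z))) + -(2 * ε)⁻¹ * ‖y‖ ^ 2 := by
    intro y
    rw [log_gaussPDF hε, sub_zero]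
    ring
  have h_entropyTerm : Integrable entropyTerm := by
    simp only [entropyTerm, h_log]
    exact (hasFiniteMoments_gaussPDF hε).integrable_smul (by fun_prop)
      (hasPolynomialGrowth_const_add_mul_norm_sq _ _)
  have h_split : ∀ x, gaussPDF d m ε x * log (gaussPDF d m ε x / πd x) =
      entropyTerm (x - m) + gaussPDF d m ε x • V x := fun x => by
    simp only [entropyTerm, gaussPDF_zero_apply_sub, log_gaussPDF_div hε hint hπd, smul_eq_mul]
    ring
  simp only [h_split]
  rw [integral_add (h_entropyTerm.comp_sub_right m)
      (integrable_gaussPDF_smul hε hV.aestronglyMeasurable hV_growth m),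
    integral_sub_right_eq_self, integral_gaussPDF_smul_eq]
  rfl

end KullbackLeibler

theorem kl_mean_gradient_single_gaussian_general
    (d : ℕ)
    (V : EuclideanSpace ℝ (Fin d) → ℝ)
    (hV : ContDiff ℝ 1 V)
    (hVgrowth : ∃ (C : ℝ) (k : ℕ), ∀ x, |V x| ≤ C * (1 + ‖x‖) ^ k)
    (hgradVgrowth : ∃ (C : ℝ) (k : ℕ), ∀ x, ‖gradient V x‖ ≤ C * (1 + ‖x‖) ^ k)
    (hint : Integrable (fun x => Real.exp (-V x)))
    (πd : EuclideanSpace ℝ (Fin d) → ℝ)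
    (hπd : ∀ x, πd x = Real.exp (-V x) / ∫ y, Real.exp (-V y))
    (ε : ℝ) (hε : 0 < ε) (m : EuclideanSpace ℝ (Fin d)) :
    HasGradientAt
      (fun mm : EuclideanSpace ℝ (Fin d) =>
        ∫ x, gaussPDF d mm ε x * Real.log (gaussPDF d mm ε x / πd x))
      (∫ x, gaussPDF d m ε x •
        gradient (fun y => Real.log (gaussPDF d m ε y / πd y)) x)
      m ∧
    (∫ x, gaussPDF d m ε x •
        gradient (fun y => Real.log (gaussPDF d m ε y / πd y)) x) =
      ∫ x, gaussPDF d m ε x • gradient V x := by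
  have hV_growth : HasPolynomialGrowth V := hVgrowth
  have hV_diff : Differentiable ℝ V := hV.differentiable one_ne_zero
  have h_mean : ∫ x, gaussPDF d m ε x • gradient (fun y => log (gaussPDF d m ε y / πd y)) x =
      ∫ x, gaussPDF d m ε x • gradient V x := by
    simp only [fun x => (hasGradientAt_log_gaussPDF_div hε hV_diff hint hπd m x).gradient,
      smul_add, smul_comm _ (-ε⁻¹)]
    have h_centered : Integrable fun x => -ε⁻¹ • gaussPDF d m ε x • (x - m) :=
      (integrable_gaussPDF_smul hε (by fun_prop) (hasPolynomialGrowth_sub_const m) m).smul (-ε⁻¹)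
    rw [integral_add h_centered (integrable_gaussPDF_smul hε
        hV.continuous_gradient.aestronglyMeasurable hgradVgrowth m),
      integral_smul, integral_gaussPDF_smul_sub_eq_zero, smul_zero, zero_add]
  refine ⟨?_, h_mean⟩
  simp only [integral_gaussPDF_mul_log_div_eq hε hV.continuous hV_growth hint hπd]
  rw [h_mean, integral_gaussPDF_smul_eq]
  exact ((hasFiniteMoments_gaussPDF hε).hasGradientAt_integral_mul_comp_add hV hV_growth
    hgradVgrowth m).const_add _

/-- Mean-gradient Stein identity for a single isotropic Gaussian: the gradient of
`m ↦ KL(N(m, εI_d) | π)` exists, equals `E_{N(m,εI_d)}[∇ log(p_m/π)]`, and that expectation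
equals `E_{N(m,εI_d)}[∇V]`. -/
theorem kl_mean_gradient_single_gaussian
    (d : ℕ) (hd : 1 ≤ d)
    (V : EuclideanSpace ℝ (Fin d) → ℝ)
    (hV : ContDiff ℝ 1 V)
    (hVgrowth : ∃ (C : ℝ) (k : ℕ), ∀ x, |V x| ≤ C * (1 + ‖x‖) ^ k)
    (hgradVgrowth : ∃ (C : ℝ) (k : ℕ), ∀ x, ‖gradient V x‖ ≤ C * (1 + ‖x‖) ^ k)
    (hint : Integrable (fun x => Real.exp (-V x)))
    (πd : EuclideanSpace ℝ (Fin d) → ℝ)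
    (hπd : ∀ x, πd x = Real.exp (-V x) / ∫ y, Real.exp (-V y))
    (ε : ℝ) (hε : 0 < ε) (m : EuclideanSpace ℝ (Fin d)) :
    HasGradientAt
      (fun mm : EuclideanSpace ℝ (Fin d) =>
        ∫ x, gaussPDF d mm ε x * Real.log (gaussPDF d mm ε x / πd x))
      (∫ x, gaussPDF d m ε x •
        gradient (fun y => Real.log (gaussPDF d m ε y / πd y)) x)
      m ∧
    (∫ x, gaussPDF d m ε x •
        gradient (fun y => Real.log (gaussPDF d m ε y / πd y)) x) =
      ∫ x, gaussPDF d m ε x • gradient V x :=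
  kl_mean_gradient_single_gaussian_general d V hV hVgrowth hgradVgrowth hint πd hπd ε hε m
end

section
/- Let d ≥ 1, m ∈ ℝ^d, ε > 0, let p = N(m, εI_d), and let g : ℝ^d → ℝ^d be measurable with ∫ ‖g(x)‖² dp(x) < ∞. Define a* = ∫ g(x) dp(x) ∈ ℝ^d and s* = (1/(dε)) ∫ ⟨x − m, g(x)⟩ dp(x) ∈ ℝ. Then for all a ∈ ℝ^d and s ∈ ℝ: ∫ ‖a* + s*(x − m) − g(x)‖² dp(x) ≤ ∫ ‖a + s(x − m) − g(x)‖² dp(x); i.e. (a*, s*) realizes the L²(p)-projection of g onto the subspace { x ↦ a + s(x − m) : a ∈ ℝ^d, s ∈ ℝ }. -/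
/-!
The density-defined Gaussian `N(m, εI_d)` coincides with `multivariateGaussian m (ε • 1)`: both
have characteristic function `t ↦ exp(i⟪t, m⟫ - ε‖t‖²/2)`. Hence `u(x) = x - m` is centred with
`E‖u‖² = tr(εI_d) = dε`. For any centred `u ∈ L²`, the map `(a, s) ↦ E‖a + s u - g‖²` is the
quadratic `‖a‖² + s² E‖u‖² + E‖g‖² - 2⟪a, E g⟫ - 2s E⟪u, g⟫`, minimized at `a = E g`,
`s = E⟪u, g⟫ / E‖u‖²`.
-/

open MeasureTheory Real
open scoped RealInnerProductSpace

/-- The isotropic Gaussian measure `N(m, ε I_d)` on `ℝ^d`. -/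
noncomputable def gaussMeasure (d : ℕ) (m : EuclideanSpace ℝ (Fin d)) (ε : ℝ) :
    Measure (EuclideanSpace ℝ (Fin d)) :=
  volume.withDensity (fun x => ENNReal.ofReal (gaussPDF d m ε x))

open ProbabilityTheory

section AffineProjection

variable {Ω E : Type*} [MeasurableSpace Ω] {μ : Measure Ω}
  [NormedAddCommGroup E] [InnerProductSpace ℝ E] {u g : Ω → E}

lemma MeasureTheory.MemLp.integrable_inner (hu : MemLp u 2 μ) (hg : MemLp g 2 μ) :
    Integrable (fun ω => ⟪u ω, g ω⟫) μ :=
  (L2.integrable_inner (𝕜 := ℝ) (hu.toLp u) (hg.toLp g)).congr <| by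
    filter_upwards [hu.coeFn_toLp, hg.coeFn_toLp] with ω hu' hg'
    rw [hu', hg']

lemma integral_inner_eq_zero_of_integral_norm_sq_eq_zero
    (hu : ∫ ω, ‖u ω‖ ^ 2 ∂μ = 0) (hu2 : Integrable (fun ω => ‖u ω‖ ^ 2) μ) :
    ∫ ω, ⟪u ω, g ω⟫ ∂μ = 0 := by
  have hu_ae : u =ᵐ[μ] 0 := by
    filter_upwards [(integral_eq_zero_iff_of_nonneg (fun ω => by positivity) hu2).1 hu]
      with ω hω
    simpa using hω
  rw [integral_congr_ae (g := 0) (by filter_upwards [hu_ae] with ω hω; simp [hω]),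
    integral_zero']

variable [IsProbabilityMeasure μ] [CompleteSpace E]

lemma integral_norm_add_smul_sub_sq (hu : MemLp u 2 μ) (hg : MemLp g 2 μ)
    (hu0 : ∫ ω, u ω ∂μ = 0) (a : E) (s : ℝ) :
    ∫ ω, ‖a + s • u ω - g ω‖ ^ 2 ∂μ
      = ‖a‖ ^ 2 + s ^ 2 * ∫ ω, ‖u ω‖ ^ 2 ∂μ + ∫ ω, ‖g ω‖ ^ 2 ∂μ
        - 2 * ⟪a, ∫ ω, g ω ∂μ⟫ - 2 * s * ∫ ω, ⟪u ω, g ω⟫ ∂μ := by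
  have hu2 := (memLp_two_iff_integrable_sq_norm hu.1).1 hu
  have hg2 := (memLp_two_iff_integrable_sq_norm hg.1).1 hg
  have hug := hu.integrable_inner hg
  have hau : Integrable (fun ω => ⟪a, u ω⟫) μ := (hu.integrable one_le_two).const_inner a
  have hag : Integrable (fun ω => ⟪a, g ω⟫) μ := (hg.integrable one_le_two).const_inner a
  have hexpand : ∀ ω, ‖a + s • u ω - g ω‖ ^ 2 = ‖a‖ ^ 2 + s ^ 2 * ‖u ω‖ ^ 2 + ‖g ω‖ ^ 2
      + 2 * s * ⟪a, u ω⟫ - 2 * ⟪a, g ω⟫ - 2 * s * ⟪u ω, g ω⟫ := fun ω => by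
    simp only [← real_inner_self_eq_norm_sq, inner_sub_left, inner_sub_right, inner_add_left,
      inner_add_right, real_inner_smul_left, real_inner_smul_right, real_inner_comm (g ω),
      real_inner_comm (u ω) a]
    ring
  simp_rw [hexpand]
  rw [integral_sub, integral_sub, integral_add, integral_add, integral_add, integral_const,
    integral_const_mul, integral_const_mul, integral_const_mul, integral_const_mul,
    integral_inner (hu.integrable one_le_two), integral_inner (hg.integrable one_le_two), hu0]
  · simp
  all_goals
    repeat' first
      | apply Integrable.sub | apply Integrable.add | apply Integrable.const_mul
      | exact integrable_const _ | assumption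

theorem integral_norm_add_smul_sub_sq_le (hu : MemLp u 2 μ) (hg : MemLp g 2 μ)
    (hu0 : ∫ ω, u ω ∂μ = 0) (a : E) (s : ℝ) :
    ∫ ω, ‖(∫ ω, g ω ∂μ) + ((∫ ω, ⟪u ω, g ω⟫ ∂μ) / ∫ ω, ‖u ω‖ ^ 2 ∂μ) • u ω - g ω‖ ^ 2 ∂μ
      ≤ ∫ ω, ‖a + s • u ω - g ω‖ ^ 2 ∂μ := by
  rw [integral_norm_add_smul_sub_sq hu hg hu0, integral_norm_add_smul_sub_sq hu hg hu0,
    real_inner_self_eq_norm_sq]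
  set V := ∫ ω, ‖u ω‖ ^ 2 ∂μ
  set B := ∫ ω, ⟪u ω, g ω⟫ ∂μ
  -- `u = 0` a.e. when `V = 0`, so then `B = 0` and the junk value `B / 0 = 0` is still optimal.
  have hB : B = B / V * V := by
    rcases eq_or_ne V 0 with hV | hV
    · rw [hV, mul_zero]
      exact integral_inner_eq_zero_of_integral_norm_sq_eq_zero hV
        ((memLp_two_iff_integrable_sq_norm hu.1).1 hu)
    · exact (div_mul_cancel₀ B hV).symm
  have hV : 0 ≤ V := integral_nonneg fun ω => by positivity
  set c := B / V
  rw [hB]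
  nlinarith [norm_sub_sq_real a (∫ ω, g ω ∂μ), mul_nonneg hV (sq_nonneg (s - c))]

end AffineProjection

section Gaussian

open Complex

variable {d : ℕ} {m : EuclideanSpace ℝ (Fin d)} {ε : ℝ}

lemma gaussPDF_eq (x : EuclideanSpace ℝ (Fin d)) :
    gaussPDF d m ε x = (2 * π * ε) ^ (-(d : ℝ) / 2) * rexp (-(2 * ε)⁻¹ * ‖x - m‖ ^ 2) := by
  rw [gaussPDF]
  congr 2
  ring

lemma measurable_gaussPDF : Measurable (gaussPDF d m ε) := by
  unfold gaussPDF
  fun_prop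

lemma gaussPDF_nonneg (hε : 0 < ε) (x : EuclideanSpace ℝ (Fin d)) : 0 ≤ gaussPDF d m ε x := by
  unfold gaussPDF
  positivity

lemma integrable_gaussPDF (hε : 0 < ε) : Integrable (gaussPDF d m ε) := by
  have h : Integrable fun y : EuclideanSpace ℝ (Fin d) => rexp (-(2 * ε)⁻¹ * ‖y‖ ^ 2) := by
    refine Integrable.of_integral_ne_zero ?_
    rw [GaussianFourier.integral_rexp_neg_mul_sq_norm (by positivity)]
    positivity
  convert (h.comp_sub_right m).const_mul ((2 * π * ε) ^ (-(d : ℝ) / 2)) using 1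
  exact funext gaussPDF_eq

lemma isFiniteMeasure_gaussMeasure (hε : 0 < ε) : IsFiniteMeasure (gaussMeasure d m ε) :=
  isFiniteMeasure_withDensity_ofReal (integrable_gaussPDF hε).2

lemma charFun_gaussMeasure (hε : 0 < ε) (t : EuclideanSpace ℝ (Fin d)) :
    charFun (gaussMeasure d m ε) t = cexp (⟪t, m⟫ * I - ε * ‖t‖ ^ 2 / 2) := by
  have hb : 0 < (((2 * ε)⁻¹ : ℝ) : ℂ).re := by simpa using hε
  rw [charFun_apply, gaussMeasure, integral_withDensity_eq_integral_toReal_smul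
    measurable_gaussPDF.ennreal_ofReal (by simp), ← integral_add_right_eq_self _ m]
  have hpt : ∀ y : EuclideanSpace ℝ (Fin d),
      (ENNReal.ofReal (gaussPDF d m ε (y + m))).toReal • cexp (⟪y + m, t⟫ * I)
        = ((2 * π * ε) ^ (-(d : ℝ) / 2) : ℝ) * cexp (⟪m, t⟫ * I)
          * cexp (-(((2 * ε)⁻¹ : ℝ) : ℂ) * ‖y‖ ^ 2 + I * ⟪t, y⟫) := fun y => by
    rw [ENNReal.toReal_ofReal (gaussPDF_nonneg hε _), gaussPDF_eq, add_sub_cancel_right,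
      Complex.real_smul, inner_add_left, real_inner_comm y t]
    push_cast
    simp only [mul_assoc, ← Complex.exp_add]
    ring_nf
  simp_rw [hpt]
  rw [integral_const_mul, GaussianFourier.integral_cexp_neg_mul_sq_norm_add hb,
    finrank_euclideanSpace_fin]
  have hε' : (ε : ℂ) ≠ 0 := by exact_mod_cast hε.ne'
  have hmass : (((2 * π * ε) ^ (-(d : ℝ) / 2) : ℝ) : ℂ)
      * (π / (((2 * ε)⁻¹ : ℝ) : ℂ)) ^ ((d : ℂ) / 2) = 1 := by
    rw [show (π : ℂ) / (((2 * ε)⁻¹ : ℝ) : ℂ) = ((2 * π * ε : ℝ) : ℂ) by push_cast; field_simp,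
      show ((d : ℂ) / 2) = (((d : ℝ) / 2 : ℝ) : ℂ) by push_cast; rfl,
      ← ofReal_cpow (by positivity), ← ofReal_mul, ← rpow_add (by positivity), neg_div,
      neg_add_cancel, rpow_zero, ofReal_one]
  calc _ = (((2 * π * ε) ^ (-(d : ℝ) / 2) : ℝ) : ℂ) * (π / (((2 * ε)⁻¹ : ℝ) : ℂ)) ^ ((d : ℂ) / 2)
        * cexp (⟪m, t⟫ * I + I ^ 2 * ‖t‖ ^ 2 / (4 * (((2 * ε)⁻¹ : ℝ) : ℂ))) := by
          rw [Complex.exp_add]; ring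
    _ = _ := by
      rw [hmass, one_mul, real_inner_comm, I_sq]
      congr 1
      push_cast
      field_simp
      ring

theorem gaussMeasure_eq_multivariateGaussian (hε : 0 < ε) :
    gaussMeasure d m ε = multivariateGaussian m (ε • 1) := by
  have hS : (ε • 1 : Matrix (Fin d) (Fin d) ℝ).PosSemidef :=
    Matrix.PosSemidef.one.smul hε.le
  have := isFiniteMeasure_gaussMeasure (m := m) hε
  refine Measure.ext_of_charFun (funext fun t => ?_)
  rw [charFun_gaussMeasure hε, charFun_multivariateGaussian hS]
  have hquad : t.ofLp ⬝ᵥ t.ofLp = ‖t‖ ^ 2 := by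
    rw [← real_inner_self_eq_norm_sq, EuclideanSpace.inner_eq_star_dotProduct, star_trivial]
  rw [Matrix.smul_mulVec, Matrix.one_mulVec, dotProduct_smul, smul_eq_mul, hquad]
  push_cast
  ring_nf

end Gaussian

section MultivariateGaussian

variable {ι : Type*} [Fintype ι] [DecidableEq ι] {μ : EuclideanSpace ℝ ι} {S : Matrix ι ι ℝ}

lemma memLp_sub_multivariateGaussian :
    MemLp (fun x => x - μ) 2 (multivariateGaussian μ S) :=
  IsGaussian.memLp_two_id.sub (memLp_const μ)

lemma integral_sub_multivariateGaussian : ∫ x, (x - μ) ∂multivariateGaussian μ S = 0 := by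
  rw [integral_sub IsGaussian.integrable_fun_id (integrable_const μ)]
  simp

lemma integral_norm_sub_sq_multivariateGaussian (hS : S.PosSemidef) :
    ∫ x, ‖x - μ‖ ^ 2 ∂multivariateGaussian μ S = S.trace := by
  simp_rw [EuclideanSpace.norm_sq_eq]
  rw [integral_finsetSum]
  · refine Finset.sum_congr rfl fun i _ => ?_
    have hmean : ∫ x, x i ∂multivariateGaussian μ S = μ i :=
      ((EuclideanSpace.proj i : EuclideanSpace ℝ ι →L[ℝ] ℝ).integral_comp_comm
        IsGaussian.integrable_id).trans (by simp)
    rw [Matrix.diag_apply, ← variance_eval_multivariateGaussian hS i,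
      variance_eq_integral (by fun_prop), hmean]
    simp
  · intro i _
    exact (memLp_two_iff_integrable_sq_norm (by fun_prop)).1
      ((EuclideanSpace.proj i : EuclideanSpace ℝ ι →L[ℝ] ℝ).comp_memLp'
        memLp_sub_multivariateGaussian)

end MultivariateGaussian

theorem ibw_tangent_projection_general
    (d : ℕ) (m : EuclideanSpace ℝ (Fin d)) (ε : ℝ) (hε : 0 < ε)
    (g : EuclideanSpace ℝ (Fin d) → EuclideanSpace ℝ (Fin d))
    (hmeas : Measurable g)
    (hL2 : Integrable (fun x => ‖g x‖ ^ 2) (gaussMeasure d m ε))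
    (astar : EuclideanSpace ℝ (Fin d)) (hastar : astar = ∫ x, g x ∂gaussMeasure d m ε)
    (sstar : ℝ)
    (hsstar : sstar = (1 / ((d : ℝ) * ε)) * ∫ x, ⟪x - m, g x⟫ ∂gaussMeasure d m ε) :
    ∀ (a : EuclideanSpace ℝ (Fin d)) (s : ℝ),
      (∫ x, ‖astar + sstar • (x - m) - g x‖ ^ 2 ∂gaussMeasure d m ε) ≤
        ∫ x, ‖a + s • (x - m) - g x‖ ^ 2 ∂gaussMeasure d m ε := by
  intro a s
  rw [gaussMeasure_eq_multivariateGaussian hε] at hL2 hastar hsstar ⊢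
  have hV : ∫ x, ‖x - m‖ ^ 2 ∂multivariateGaussian m (ε • 1) = d * ε := by
    rw [integral_norm_sub_sq_multivariateGaussian (Matrix.PosSemidef.one.smul hε.le),
      Matrix.trace_smul, Matrix.trace_one, Fintype.card_fin, smul_eq_mul, mul_comm]
  rw [hastar, hsstar, ← hV, one_div_mul_eq_div]
  exact integral_norm_add_smul_sub_sq_le memLp_sub_multivariateGaussian
    ((memLp_two_iff_integrable_sq_norm hmeas.aestronglyMeasurable).2 hL2)
    integral_sub_multivariateGaussian a s

/-- `(a*, s*)` with `a* = E_p[g]` and `s* = (1/(dε)) E_p[⟨x − m, g(x)⟩]` realizes the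
`L²(p)`-projection of `g` onto the tangent space `{x ↦ a + s(x − m)}` of the isotropic
Bures–Wasserstein manifold at `p = N(m, εI_d)`. -/
theorem ibw_tangent_projection
    (d : ℕ) (hd : 1 ≤ d) (m : EuclideanSpace ℝ (Fin d)) (ε : ℝ) (hε : 0 < ε)
    (g : EuclideanSpace ℝ (Fin d) → EuclideanSpace ℝ (Fin d))
    (hmeas : Measurable g)
    (hL2 : Integrable (fun x => ‖g x‖ ^ 2) (gaussMeasure d m ε))
    (astar : EuclideanSpace ℝ (Fin d)) (hastar : astar = ∫ x, g x ∂gaussMeasure d m ε)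
    (sstar : ℝ)
    (hsstar : sstar = (1 / ((d : ℝ) * ε)) * ∫ x, ⟪x - m, g x⟫ ∂gaussMeasure d m ε) :
    ∀ (a : EuclideanSpace ℝ (Fin d)) (s : ℝ),
      (∫ x, ‖astar + sstar • (x - m) - g x‖ ^ 2 ∂gaussMeasure d m ε) ≤
        ∫ x, ‖a + s • (x - m) - g x‖ ^ 2 ∂gaussMeasure d m ε :=
  ibw_tangent_projection_general d m ε hε g hmeas hL2 astar hastar sstar hsstar
end

section
/- For every x > 0 with x ≠ 1: (x log x − x + 1)/(x − 1) ≤ √x − 1. Equivalently, B(x)(x − 1) ≤ √x − 1 where B(x) = (x log x − x + 1)/(x − 1)². -/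
open Real

private lemma f_mono : MonotoneOn (fun t : ℝ => t - t⁻¹ - 2 * Real.log t) (Set.Ioi 0) := by
  have hint : interior (Set.Ioi (0:ℝ)) = Set.Ioi 0 := interior_Ioi
  apply monotoneOn_of_deriv_nonneg (convex_Ioi 0)
  · apply ContinuousOn.sub
    · exact (continuousOn_id).sub (continuousOn_id.inv₀ (fun t ht => ne_of_gt ht))
    · exact continuousOn_const.mul (Real.continuousOn_log.mono (fun t ht => ne_of_gt ht))
  · rw [hint]
    intro t ht
    have ht0 : (t:ℝ) ≠ 0 := ne_of_gt ht
    exact (((hasDerivAt_id t).sub (hasDerivAt_inv ht0)).sub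
      ((Real.hasDerivAt_log ht0).const_mul 2)).differentiableAt.differentiableWithinAt
  · rw [hint]
    intro t ht
    have ht0 : (t:ℝ) ≠ 0 := ne_of_gt (Set.mem_Ioi.mp ht)
    have hd : HasDerivAt (fun t : ℝ => t - t⁻¹ - 2 * Real.log t)
        (1 - (-(t^2)⁻¹) - 2 * t⁻¹) t :=
      ((hasDerivAt_id t).sub (hasDerivAt_inv ht0)).sub
        ((Real.hasDerivAt_log ht0).const_mul 2)
    rw [hd.deriv]
    have h1 : (0:ℝ) ≤ (1 - t⁻¹)^2 := sq_nonneg _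
    have h2 : t⁻¹ * t⁻¹ = (t^2)⁻¹ := by rw [sq, mul_inv]
    nlinarith [h1, h2]

private lemma key_pos {t : ℝ} (ht : 1 ≤ t) : 0 ≤ t - t⁻¹ - 2 * Real.log t := by
  have := f_mono (Set.mem_Ioi.mpr (by norm_num : (0:ℝ) < 1))
      (Set.mem_Ioi.mpr (lt_of_lt_of_le one_pos ht)) ht
  simpa using this

private lemma key_neg {t : ℝ} (ht0 : 0 < t) (ht : t ≤ 1) : t - t⁻¹ - 2 * Real.log t ≤ 0 := by
  have := f_mono (Set.mem_Ioi.mpr ht0) (Set.mem_Ioi.mpr (by norm_num : (0:ℝ) < 1)) ht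
  simpa using this

private lemma main_ineq : ∀ x : ℝ, 0 < x → x ≠ 1 →
    (x * Real.log x - x + 1) / (x - 1) ≤ Real.sqrt x - 1 := by
  intro x hx hne
  set t := Real.sqrt x with htdef
  have ht0 : 0 < t := Real.sqrt_pos.mpr hx
  have hx2 : x = t ^ 2 := (Real.sq_sqrt hx.le).symm
  have hlog : Real.log x = 2 * Real.log t := by
    rw [hx2, Real.log_pow]; push_cast; ring
  have hinv : t * t⁻¹ = 1 := mul_inv_cancel₀ (ne_of_gt ht0)
  have hlog2 : Real.log (t ^ 2) = 2 * Real.log t := by rw [← hx2, hlog]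
  rcases lt_or_gt_of_ne hne with hlt | hgt
  · -- x < 1, so t < 1
    have htl : t ≤ 1 := by
      nlinarith [hx2]
    rw [div_le_iff_of_neg (by linarith : x - 1 < 0)]
    have hf := key_neg ht0 htl
    have h3 : t ^ 2 * (t - t⁻¹ - 2 * Real.log t) ≤ 0 :=
      mul_nonpos_of_nonneg_of_nonpos (sq_nonneg t) hf
    rw [hx2, hlog2]
    nlinarith [h3, hinv]
  · -- x > 1, so t > 1
    have htl : 1 ≤ t := by
      nlinarith [hx2, ht0]
    rw [div_le_iff₀ (by linarith : (0:ℝ) < x - 1)]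
    have hf := key_pos htl
    have h3 : 0 ≤ t ^ 2 * (t - t⁻¹ - 2 * Real.log t) :=
      mul_nonneg (sq_nonneg t) hf
    rw [hx2, hlog2]
    nlinarith [h3, hinv]

/-- **Lemma 2**: for every `x > 0`, `x ≠ 1`,
`(x log x − x + 1)/(x − 1) ≤ √x − 1`; equivalently `B(x)(x − 1) ≤ √x − 1` where
`B(x) = (x log x − x + 1)/(x − 1)²`. -/
theorem xlogx_ratio_le_sqrt_sub_one :
    (∀ x : ℝ, 0 < x → x ≠ 1 →
      (x * Real.log x - x + 1) / (x - 1) ≤ Real.sqrt x - 1) ∧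
    (∀ x : ℝ, 0 < x → x ≠ 1 →
      ((x * Real.log x - x + 1) / (x - 1) ^ 2) * (x - 1) ≤ Real.sqrt x - 1) := by
  refine ⟨main_ineq, fun x hx hne => ?_⟩
  have h1 : x - 1 ≠ 0 := sub_ne_zero.mpr hne
  have heq : ((x * Real.log x - x + 1) / (x - 1) ^ 2) * (x - 1)
      = (x * Real.log x - x + 1) / (x - 1) := by
    field_simp
  rw [heq]
  exact main_ineq x hx hne
end
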